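/- Let α > 0, β ∈ ℝ with |β| < α, and δ > 0, and let ψ : ℝ → ℂ be the Normal Inverse Gaussian characteristic exponent ψ(u) := −δ (√(α² − (β + iu)²) − √(α² − β²)), where the square root of a complex number is the principal branch. Then for every u ∈ ℝ, lim_{t → 0+} t · ψ(u / t) = −δ |u|. (Scaling limit of the NIG characteristic exponent towards the Cauchy exponent.) -/

import Mathlib

/-!
For `t > 0` the factor `t` can be pushed under the principal square root as `t²`, which turns
`t ψ(u/t)` into `−δ (√((αt)² − (βt + iu)²) − t √(α² − β²))`. This expression is continuous in
`t` at `0`, where it equals `−δ √(u²) = −δ |u|`.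
-/

open Filter Topology Complex

/-- The Normal Inverse Gaussian characteristic exponent
`ψ(u) = −δ (√(α² − (β + iu)²) − √(α² − β²))`, the complex square root being the
principal branch `z ^ (1/2)`. -/
noncomputable def nigPsi (α β δ : ℝ) (u : ℝ) : ℂ :=
  -(δ : ℂ) * ((((α : ℂ) ^ 2 - ((β : ℂ) + Complex.I * u) ^ 2) ^ ((1 : ℂ) / 2))
      - (Real.sqrt (α ^ 2 - β ^ 2) : ℂ))

namespace Complex

theorem ofReal_mul_cpow_of_nonneg {a : ℝ} (ha : 0 ≤ a) (z r : ℂ) :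
    ((a : ℂ) * z) ^ r = (a : ℂ) ^ r * z ^ r := by
  rcases eq_or_ne r 0 with rfl | hr
  · simp
  rcases ha.eq_or_lt with rfl | ha
  · simp [zero_cpow hr]
  rcases eq_or_ne z 0 with rfl | hz
  · simp [zero_cpow hr]
  have ha' : (a : ℂ) ≠ 0 := ofReal_ne_zero.mpr ha.ne'
  rw [cpow_def_of_ne_zero (mul_ne_zero ha' hz), log_ofReal_mul ha hz, ofReal_log ha.le,
    add_mul, exp_add, ← cpow_def_of_ne_zero ha', ← cpow_def_of_ne_zero hz]

theorem ofReal_mul_cpow_half {t : ℝ} (ht : 0 ≤ t) (z : ℂ) :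
    (t : ℂ) * z ^ ((1 : ℂ) / 2) = ((t : ℂ) ^ 2 * z) ^ ((1 : ℂ) / 2) := by
  have hsq : ((t : ℂ) ^ 2) ^ ((1 : ℂ) / 2) = t := by
    rw [← ofReal_pow, show ((1 : ℂ) / 2) = ((1 / 2 : ℝ) : ℂ) by norm_num,
      ← ofReal_cpow (by positivity), ← Real.sqrt_eq_rpow, Real.sqrt_sq ht]
  rw [← ofReal_pow, ofReal_mul_cpow_of_nonneg (by positivity), ofReal_pow, hsq]

theorem sq_ofReal_cpow_half (u : ℝ) : ((u : ℂ) ^ 2) ^ ((1 : ℂ) / 2) = |u| := by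
  have h := ofReal_mul_cpow_half (abs_nonneg u) 1
  rw [one_cpow, mul_one, mul_one, ← ofReal_pow, sq_abs, ofReal_pow] at h
  exact h.symm

end Complex

noncomputable def nigPsiScaled (α β δ u t : ℝ) : ℂ :=
  -(δ : ℂ) * ((((α : ℂ) * t) ^ 2 - ((β : ℂ) * t + I * u) ^ 2) ^ ((1 : ℂ) / 2)
      - t * (Real.sqrt (α ^ 2 - β ^ 2) : ℂ))

section

variable (α β δ u : ℝ)

theorem ofReal_mul_nigPsi_div {t : ℝ} (ht : 0 < t) :
    (t : ℂ) * nigPsi α β δ (u / t) = nigPsiScaled α β δ u t := by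
  have htC : (t : ℂ) ≠ 0 := ofReal_ne_zero.mpr ht.ne'
  have hbase : (t : ℂ) ^ 2 * ((α : ℂ) ^ 2 - ((β : ℂ) + I * ((u / t : ℝ) : ℂ)) ^ 2)
      = ((α : ℂ) * t) ^ 2 - ((β : ℂ) * t + I * u) ^ 2 := by
    push_cast
    field_simp
  rw [nigPsi, nigPsiScaled, ← hbase, ← ofReal_mul_cpow_half ht.le]
  ring

theorem nigPsiScaled_base_zero :
    ((α : ℂ) * (0 : ℝ)) ^ 2 - ((β : ℂ) * (0 : ℝ) + I * u) ^ 2 = (u : ℂ) ^ 2 := by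
  simp only [ofReal_zero, mul_zero, zero_add, mul_pow, I_sq]
  ring

theorem nigPsiScaled_zero : nigPsiScaled α β δ u 0 = ((-δ * |u| : ℝ) : ℂ) := by
  rw [nigPsiScaled, nigPsiScaled_base_zero, sq_ofReal_cpow_half]
  push_cast
  ring

theorem continuousAt_nigPsiScaled_zero : ContinuousAt (nigPsiScaled α β δ u) 0 := by
  have hbase : ContinuousAt
      (fun t : ℝ => ((α : ℂ) * t) ^ 2 - ((β : ℂ) * t + I * u) ^ 2) 0 := by
    fun_prop
  have hre : 0 ≤ ((u : ℂ) ^ 2).re := by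
    rw [← ofReal_pow, ofReal_re]
    positivity
  have hsqrt : ContinuousAt
      (fun t : ℝ => (((α : ℂ) * t) ^ 2 - ((β : ℂ) * t + I * u) ^ 2) ^ ((1 : ℂ) / 2)) 0 :=
    (continuousAt_cpow_const_of_re_pos (.inl hre) (by norm_num)).comp_of_eq hbase
      (nigPsiScaled_base_zero α β u)
  unfold nigPsiScaled
  fun_prop

end

theorem nig_char_exponent_scaling_limit_general
    (α β δ : ℝ) (u : ℝ) :
    Tendsto (fun t : ℝ => (t : ℂ) * nigPsi α β δ (u / t))
      (𝓝[>] (0 : ℝ)) (𝓝 ((-δ * |u| : ℝ) : ℂ)) := by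
  have hlim : Tendsto (nigPsiScaled α β δ u) (𝓝[>] 0) (𝓝 ((-δ * |u| : ℝ) : ℂ)) := by
    rw [← nigPsiScaled_zero α β δ u]
    exact (continuousAt_nigPsiScaled_zero α β δ u).tendsto.mono_left nhdsWithin_le_nhds
  exact hlim.congr' (eventually_nhdsWithin_of_forall fun t ht =>
    (ofReal_mul_nigPsi_div α β δ u ht).symm)

/-- Scaling limit of the NIG characteristic exponent towards the Cauchy exponent:
for every `u ∈ ℝ`, `lim_{t→0+} t ψ(u/t) = −δ |u|`. -/
theorem nig_char_exponent_scaling_limit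
    (α β δ : ℝ) (hα : 0 < α) (hβ : |β| < α) (hδ : 0 < δ) (u : ℝ) :
    Tendsto (fun t : ℝ => (t : ℂ) * nigPsi α β δ (u / t))
      (𝓝[>] (0 : ℝ)) (𝓝 ((-δ * |u| : ℝ) : ℂ)) :=
  nig_char_exponent_scaling_limit_general α β δ u
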